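/- Let K ≥ 1, λ ≥ 0, let c₁, …, c_K be positive real numbers, and let L : ℝ^K → ℝ be an arbitrary function. Define J(v) = L(v) + λ·∑_{k=1}^K √(v_k² + c_k²) and H(v) = L(v) + λ·∑_{k=1}^K ( c_k + v_k²/(2 c_k) ) for v ∈ ℝ^K. Then J(v) ≤ H(v) for every v ∈ ℝ^K, and if v′ ∈ ℝ^K is a global minimizer of H over ℝ^K, then for every v* ∈ ℝ^K: J(v′) ≤ J(v*) + (λ/2)·∑_{k=1}^K (v*_k)⁴ / c_k³. -/

import Mathlib

open scoped BigOperators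

noncomputable section

/-- The objective `J(v) = L(v) + λ ∑ₖ √(vₖ² + cₖ²)`. -/
def Jobj {K : ℕ} (lam : ℝ) (c : Fin K → ℝ) (L : (Fin K → ℝ) → ℝ)
    (v : Fin K → ℝ) : ℝ :=
  L v + lam * ∑ k : Fin K, Real.sqrt ((v k) ^ 2 + (c k) ^ 2)

/-- The surrogate objective `H(v) = L(v) + λ ∑ₖ (cₖ + vₖ²/(2cₖ))`. -/
def Hobj {K : ℕ} (lam : ℝ) (c : Fin K → ℝ) (L : (Fin K → ℝ) → ℝ)
    (v : Fin K → ℝ) : ℝ :=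
  L v + lam * ∑ k : Fin K, (c k + (v k) ^ 2 / (2 * c k))

lemma sqrt_le_sur (v c : ℝ) (hc : 0 < c) :
    Real.sqrt (v ^ 2 + c ^ 2) ≤ c + v ^ 2 / (2 * c) := by
  have hy : (0:ℝ) ≤ c + v ^ 2 / (2 * c) := by positivity
  rw [show c + v ^ 2 / (2 * c) = Real.sqrt ((c + v ^ 2 / (2 * c)) ^ 2) from
    (Real.sqrt_sq hy).symm]
  apply Real.sqrt_le_sqrt
  have hexp : (c + v ^ 2 / (2 * c)) ^ 2
      = c ^ 2 + v ^ 2 + (v ^ 2 / (2 * c)) ^ 2 := by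
    field_simp; ring
  nlinarith [sq_nonneg (v ^ 2 / (2 * c))]

lemma sur_le_sqrt (v c : ℝ) (hc : 0 < c) :
    c + v ^ 2 / (2 * c) ≤ Real.sqrt (v ^ 2 + c ^ 2) + v ^ 4 / (2 * c ^ 3) := by
  have hs := Real.sq_sqrt (by positivity : (0:ℝ) ≤ v ^ 2 + c ^ 2)
  have hs0 := Real.sqrt_nonneg (v ^ 2 + c ^ 2)
  set s := Real.sqrt (v ^ 2 + c ^ 2) with hsdef
  have hsc : c ≤ s := by nlinarith [sq_nonneg (s + c)]
  have h1m : 2 * c * s ≤ 2 * c ^ 2 + v ^ 2 := by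
    nlinarith [sq_nonneg (v ^ 2), mul_pos hc hc, sq_nonneg (2*c^2 + v^2 - 2*c*s)]
  have key : 2 * c ^ 4 + v ^ 2 * c ^ 2 ≤ 2 * c ^ 3 * s + v ^ 4 := by
    rcases le_or_gt (v ^ 2) (c ^ 2) with h | h
    · by_contra hcon
      push_neg at hcon
      have hsc2 : 0 < s + c := by linarith
      have hA : 0 < 2 * c ^ 4 + v ^ 2 * c ^ 2 - 2 * c ^ 3 * s - v ^ 4 := by
        linarith
      have hB := mul_pos hA (mul_pos hc hsc2)
      have term1 : 0 ≤ v ^ 2 * ((c ^ 2 - v ^ 2) * (2 * c ^ 2 + v ^ 2 - 2 * c * s)) :=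
        mul_nonneg (sq_nonneg v)
          (mul_nonneg (by linarith) (by linarith))
      have hs3 : c ^ 3 * s ^ 2 = c ^ 3 * (v ^ 2 + c ^ 2) := by rw [hs]
      nlinarith [hB, term1, hs3, mul_nonneg (sq_nonneg (v*c)) (sq_nonneg v),
        sq_nonneg (v*v*v)]
    · nlinarith [mul_pos (mul_pos hc hc) hc, sq_nonneg v, hsc]
  have h2c3 : (0:ℝ) < 2 * c ^ 3 := by positivity
  calc c + v ^ 2 / (2 * c) = (2 * c ^ 4 + v ^ 2 * c ^ 2) / (2 * c ^ 3) := by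
        field_simp
    _ ≤ (2 * c ^ 3 * s + v ^ 4) / (2 * c ^ 3) := by gcongr
    _ = s + v ^ 4 / (2 * c ^ 3) := by field_simp

/-- `J ≤ H` everywhere, and any global minimizer `v′` of `H`
is a near-minimizer of `J`: for every `v*`,
`J(v′) ≤ J(v*) + (λ/2) ∑ₖ (v*ₖ)⁴ / cₖ³`. -/
theorem surrogate_minimizer_near_optimal {K : ℕ} (hK : 1 ≤ K)
    (lam : ℝ) (hlam : 0 ≤ lam)
    (c : Fin K → ℝ) (hc : ∀ k, 0 < c k)
    (L : (Fin K → ℝ) → ℝ) :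
    (∀ v : Fin K → ℝ, Jobj lam c L v ≤ Hobj lam c L v) ∧
    ∀ v' : Fin K → ℝ, (∀ v : Fin K → ℝ, Hobj lam c L v' ≤ Hobj lam c L v) →
      ∀ vstar : Fin K → ℝ,
        Jobj lam c L v' ≤
          Jobj lam c L vstar + (lam / 2) * ∑ k : Fin K, (vstar k) ^ 4 / (c k) ^ 3 := by
  have hJH : ∀ v : Fin K → ℝ, Jobj lam c L v ≤ Hobj lam c L v := by
    intro v
    have hsum : ∑ k : Fin K, Real.sqrt ((v k) ^ 2 + (c k) ^ 2)
        ≤ ∑ k : Fin K, (c k + (v k) ^ 2 / (2 * c k)) :=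
      Finset.sum_le_sum fun k _ => sqrt_le_sur (v k) (c k) (hc k)
    have := mul_le_mul_of_nonneg_left hsum hlam
    unfold Jobj Hobj
    linarith
  refine ⟨hJH, fun v' hmin vstar => ?_⟩
  have hsum : ∑ k : Fin K, (c k + (vstar k) ^ 2 / (2 * c k))
      ≤ ∑ k : Fin K, (Real.sqrt ((vstar k) ^ 2 + (c k) ^ 2)
          + (vstar k) ^ 4 / (2 * (c k) ^ 3)) :=
    Finset.sum_le_sum fun k _ => sur_le_sqrt (vstar k) (c k) (hc k)
  have hsplit : ∑ k : Fin K, (Real.sqrt ((vstar k) ^ 2 + (c k) ^ 2)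
        + (vstar k) ^ 4 / (2 * (c k) ^ 3))
      = (∑ k : Fin K, Real.sqrt ((vstar k) ^ 2 + (c k) ^ 2))
        + (1 / 2) * ∑ k : Fin K, (vstar k) ^ 4 / (c k) ^ 3 := by
    rw [Finset.sum_add_distrib, Finset.mul_sum]
    congr 1
    exact Finset.sum_congr rfl fun k _ => by
      rw [div_mul_eq_mul_div, one_mul]
      ring
  rw [hsplit] at hsum
  have hHJ : Hobj lam c L vstar ≤
      Jobj lam c L vstar + (lam / 2) * ∑ k : Fin K, (vstar k) ^ 4 / (c k) ^ 3 := by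
    have := mul_le_mul_of_nonneg_left hsum hlam
    unfold Jobj Hobj
    nlinarith [this]
  exact (hJH v').trans ((hmin vstar).trans hHJ)

end
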